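/- Fix natural numbers L (number of observed STFT frames), Fq (number of frequency bins), K ≥ 1 (number of sources), C ≥ 1 (number of microphone channels), F and P (future and past filter taps), and let J = Finset.Icc (-(F : ℤ)) (P : ℤ) be the tap index set. Let X₁, …, X_C : Fin L → Fin Fq → ℂ be the observed per-channel mixtures, let Ŝ₁, …, Ŝ_K : ℤ → Fin Fq → ℂ be source estimates, let σ_N > 0 and c₀ > 0. For a family of filters G = (G^k_c)_{k ∈ Fin K, c ∈ Fin C} (each G^k_c : J → Fin Fq → ℂ), define the joint log-likelihood ℓ(G) = Σ_{c=1}^{C} Real.log (c₀ * Real.exp (-(1/(2 σ_N²)) * Σ_{l,f} ‖X_c l f − Σ_{k=1}^{K} (G^k_c *_l Ŝ_k)(l, f)‖²)) (channels are conditionally independent given sources and filters, so the joint log-likelihood is the sum over channels). Assume for every channel c and all k ≠ k′ and all filters G, G′ : J → Fin Fq → ℂ that Σ_{l,f} (G *_l Ŝ_k)(l,f) * conj((G′ *_l Ŝ_{k′})(l,f)) = 0. Then a family (Ĝ^k_c) maximizes ℓ over all filter families if and only if for every pair (k, c), Ĝ^k_c minimizes the FCP objective G ↦ Σ_{l,f}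 ‖X_c l f − (G *_l Ŝ_k)(l, f)‖² over all filters G : J → Fin Fq → ℂ. -/

import Mathlib

open Finset

/-- Frame-domain convolution of a filter `G` (supported on the tap set
`J = Finset.Icc (-(F : ℤ)) (P : ℤ)`) with a source `S`:
`(G *_l S)(l, f) = ∑_{j ∈ J} G j f * S (l - j) f`. -/
noncomputable def frameConv (L Fq F P : ℕ)
    (G : ↥(Finset.Icc (-(F : ℤ)) (P : ℤ)) → Fin Fq → ℂ)
    (S : ℤ → Fin Fq → ℂ) (l : Fin L) (f : Fin Fq) : ℂ :=
  ∑ j : ↥(Finset.Icc (-(F : ℤ)) (P : ℤ)), G j f * S ((l : ℤ) - (j : ℤ)) f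

/-- The FCP objective for channel mixture `X` and source estimate `S`:
`G ↦ ∑_{l,f} ‖X l f − (G *_l S)(l, f)‖²`. -/
noncomputable def fcpObjective (L Fq F P : ℕ) (X : Fin L → Fin Fq → ℂ)
    (S : ℤ → Fin Fq → ℂ)
    (G : ↥(Finset.Icc (-(F : ℤ)) (P : ℤ)) → Fin Fq → ℂ) : ℝ :=
  ∑ l : Fin L, ∑ f : Fin Fq, ‖X l f - frameConv L Fq F P G S l f‖ ^ 2

/-- The joint Gaussian log-likelihood of a filter family `(G^k_c)`:
the sum over channels `c` of
`log (c₀ * exp (-(1/(2 σ_N²)) * ∑_{l,f} ‖X_c l f − ∑_k (G^k_c *_l Ŝ_k)(l,f)‖²))`. -/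
noncomputable def jointLogLik (L Fq K C F P : ℕ)
    (X : Fin C → Fin L → Fin Fq → ℂ)
    (S : Fin K → ℤ → Fin Fq → ℂ) (σN c₀ : ℝ)
    (G : Fin K → Fin C → ↥(Finset.Icc (-(F : ℤ)) (P : ℤ)) → Fin Fq → ℂ) : ℝ :=
  ∑ c : Fin C, Real.log (c₀ * Real.exp (-(1 / (2 * σN ^ 2)) *
    ∑ l : Fin L, ∑ f : Fin Fq,
      ‖X c l f - ∑ k : Fin K, frameConv L Fq F P (G k c) (S k) l f‖ ^ 2))

/-! Pairwise orthogonal approximations of `x` interact only through `‖x‖²`: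
`‖x - ∑ₖ yₖ‖² = ∑ₖ ‖x - yₖ‖² - (K - 1) ‖x‖²`. Under the orthogonality hypothesis this splits the
negative log-likelihood of every channel, up to a positive factor and an additive constant, into
the sum of the FCP objectives of its sources, so maximizing the likelihood over all filter
families is minimizing a separable sum, which happens exactly when every summand is minimal. -/

open scoped InnerProductSpace ComplexConjugate

section InnerProduct

variable {𝕜 E ι : Type*} [RCLike 𝕜] [NormedAddCommGroup E] [InnerProductSpace 𝕜 E] [Fintype ι]

theorem norm_sum_sq_of_pairwise_inner_eq_zero (y : ι → E)
    (h : Pairwise fun i j => ⟪y i, y j⟫_𝕜 = 0) : ‖∑ i, y i‖ ^ 2 = ∑ i, ‖y i‖ ^ 2 := by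
  classical
  rw [@norm_sq_eq_re_inner 𝕜, sum_inner, map_sum]
  refine sum_congr rfl fun i _ => ?_
  rw [inner_sum, Fintype.sum_eq_single i fun j hj => h (Ne.symm hj), ← @norm_sq_eq_re_inner 𝕜]

theorem norm_sub_sum_sq_of_pairwise_inner_eq_zero (x : E) (y : ι → E)
    (h : Pairwise fun i j => ⟪y i, y j⟫_𝕜 = 0) :
    ‖x - ∑ i, y i‖ ^ 2 = ∑ i, ‖x - y i‖ ^ 2 - (Fintype.card ι - 1) * ‖x‖ ^ 2 := by
  simp only [@norm_sub_sq 𝕜, norm_sum_sq_of_pairwise_inner_eq_zero y h, inner_sum, map_sum,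
    sum_add_distrib, sum_sub_distrib, sum_const, card_univ, nsmul_eq_mul, ← mul_sum]
  ring

end InnerProduct

section DoubleSum

variable {𝕜 α β ι : Type*} [RCLike 𝕜] [Fintype α] [Fintype β] [Fintype ι]

theorem sum_sum_norm_sq_eq_norm_sq_toLp (u : α → β → 𝕜) :
    ∑ a, ∑ b, ‖u a b‖ ^ 2 = ‖WithLp.toLp 2 (Function.uncurry u)‖ ^ 2 := by
  rw [EuclideanSpace.norm_sq_eq, Fintype.sum_prod_type]
  rfl

theorem sum_sum_mul_conj_eq_inner_toLp (u v : α → β → 𝕜) :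
    ∑ a, ∑ b, u a b * conj (v a b) =
      ⟪WithLp.toLp 2 (Function.uncurry v), WithLp.toLp 2 (Function.uncurry u)⟫_𝕜 := by
  simp [PiLp.inner_apply, Fintype.sum_prod_type]

theorem sum_sum_norm_sub_sum_sq (x : α → β → 𝕜) (y : ι → α → β → 𝕜)
    (h : ∀ i j, i ≠ j → ∑ a, ∑ b, y i a b * conj (y j a b) = 0) :
    ∑ a, ∑ b, ‖x a b - ∑ i, y i a b‖ ^ 2 =
      ∑ i, ∑ a, ∑ b, ‖x a b - y i a b‖ ^ 2 - (Fintype.card ι - 1) * ∑ a, ∑ b, ‖x a b‖ ^ 2 := by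
  let v : (α → β → 𝕜) → EuclideanSpace 𝕜 (α × β) := fun u => WithLp.toLp 2 (Function.uncurry u)
  have horth : Pairwise fun i j => ⟪v (y i), v (y j)⟫_𝕜 = 0 :=
    fun i j hij => (sum_sum_mul_conj_eq_inner_toLp _ _).symm.trans (h j i hij.symm)
  have hsub_sum : v (fun a b => x a b - ∑ i, y i a b) = v x - ∑ i, v (y i) := by
    ext ⟨a, b⟩; simp [v]
  have hsub : ∀ i, v (fun a b => x a b - y i a b) = v x - v (y i) := fun i => by
    ext ⟨a, b⟩; simp [v]
  simp only [sum_sum_norm_sq_eq_norm_sq_toLp]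
  change ‖v _‖ ^ 2 = ∑ i, ‖v _‖ ^ 2 - _ * ‖v x‖ ^ 2
  simp only [hsub_sum, hsub]
  exact norm_sub_sum_sq_of_pairwise_inner_eq_zero _ _ horth

end DoubleSum

theorem forall_sum_le_sum_iff_forall_le {ι : Type*} {α : ι → Type*} [Fintype ι] [DecidableEq ι]
    (φ : (i : ι) → α i → ℝ) (x : (i : ι) → α i) :
    (∀ y : (i : ι) → α i, ∑ i, φ i (x i) ≤ ∑ i, φ i (y i)) ↔ ∀ i a, φ i (x i) ≤ φ i a := by
  refine ⟨fun h i a => ?_, fun h y => sum_le_sum fun i _ => h i (y i)⟩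
  have hdiff : ∑ j, φ j (Function.update x i a j) - ∑ j, φ j (x j) = φ i a - φ i (x i) := by
    rw [← sum_sub_distrib, Fintype.sum_eq_single i fun j hj => by simp [hj], Function.update_self]
  linarith [h (Function.update x i a)]

theorem forall_sum_sum_le_sum_sum_iff_forall_le {ι κ α : Type*} [Fintype ι] [Fintype κ]
    [DecidableEq ι] [DecidableEq κ] (φ : ι → κ → α → ℝ) (x : ι → κ → α) :
    (∀ y : ι → κ → α, ∑ i, ∑ j, φ i j (x i j) ≤ ∑ i, ∑ j, φ i j (y i j)) ↔
      ∀ i j a, φ i j (x i j) ≤ φ i j a := by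
  simp only [← Fintype.sum_prod_type']
  refine Iff.trans ⟨fun h y => h (Function.curry y), fun h y => h (Function.uncurry y)⟩ ?_
  exact (forall_sum_le_sum_iff_forall_le (fun p : ι × κ => φ p.1 p.2) (Function.uncurry x)).trans
    Prod.forall

theorem jointLogLik_eq_sub_sum_fcpObjective {L Fq K C F P : ℕ} {X : Fin C → Fin L → Fin Fq → ℂ}
    {Shat : Fin K → ℤ → Fin Fq → ℂ} {σN c₀ : ℝ} (hc : 0 < c₀)
    (horth : Fin C → ∀ k k' : Fin K, k ≠ k' →
      ∀ G G' : ↥(Finset.Icc (-(F : ℤ)) (P : ℤ)) → Fin Fq → ℂ,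
        ∑ l : Fin L, ∑ f : Fin Fq,
          frameConv L Fq F P G (Shat k) l f * conj (frameConv L Fq F P G' (Shat k') l f) = 0)
    (G : Fin K → Fin C → ↥(Finset.Icc (-(F : ℤ)) (P : ℤ)) → Fin Fq → ℂ) :
    jointLogLik L Fq K C F P X Shat σN c₀ G =
      ∑ c, (Real.log c₀ + (K - 1) / (2 * σN ^ 2) * ∑ l, ∑ f, ‖X c l f‖ ^ 2)
        - 1 / (2 * σN ^ 2) * ∑ k, ∑ c, fcpObjective L Fq F P (X c) (Shat k) (G k c) := by
  have hchannel : ∀ c, ∑ l, ∑ f, ‖X c l f - ∑ k, frameConv L Fq F P (G k c) (Shat k) l f‖ ^ 2 =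
      ∑ k, fcpObjective L Fq F P (X c) (Shat k) (G k c) - (K - 1) * ∑ l, ∑ f, ‖X c l f‖ ^ 2 :=
    fun c => by
      simpa [fcpObjective] using sum_sum_norm_sub_sum_sq (X c)
        (fun k => frameConv L Fq F P (G k c) (Shat k)) fun k k' hk => horth c k k' hk _ _
  simp only [jointLogLik, Real.log_mul hc.ne' (Real.exp_pos _).ne', Real.log_exp, hchannel]
  rw [sum_comm (γ := Fin K), mul_sum, ← sum_sub_distrib]
  exact sum_congr rfl fun c _ => by ring

theorem fcp_is_maximum_likelihood_multichannel_general
    (L Fq K C F P : ℕ)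
    (X : Fin C → Fin L → Fin Fq → ℂ) (Shat : Fin K → ℤ → Fin Fq → ℂ)
    (σN c₀ : ℝ) (hσ : 0 < σN) (hc : 0 < c₀)
    (horth : ∀ c : Fin C, ∀ k k' : Fin K, k ≠ k' →
      ∀ G G' : ↥(Finset.Icc (-(F : ℤ)) (P : ℤ)) → Fin Fq → ℂ,
        ∑ l : Fin L, ∑ f : Fin Fq,
          frameConv L Fq F P G (Shat k) l f *
            (starRingEnd ℂ) (frameConv L Fq F P G' (Shat k') l f) = 0)
    (Ghat : Fin K → Fin C → ↥(Finset.Icc (-(F : ℤ)) (P : ℤ)) → Fin Fq → ℂ) :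
    (∀ G : Fin K → Fin C → ↥(Finset.Icc (-(F : ℤ)) (P : ℤ)) → Fin Fq → ℂ,
        jointLogLik L Fq K C F P X Shat σN c₀ G
          ≤ jointLogLik L Fq K C F P X Shat σN c₀ Ghat)
      ↔ (∀ k : Fin K, ∀ c : Fin C,
          ∀ G : ↥(Finset.Icc (-(F : ℤ)) (P : ℤ)) → Fin Fq → ℂ,
            fcpObjective L Fq F P (X c) (Shat k) (Ghat k c)
              ≤ fcpObjective L Fq F P (X c) (Shat k) G) := by
  have hscale : 0 < 1 / (2 * σN ^ 2) := by positivity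
  simp only [jointLogLik_eq_sub_sum_fcpObjective hc horth, sub_le_sub_iff_left,
    mul_le_mul_iff_right₀ hscale]
  exact forall_sum_sum_le_sum_sum_iff_forall_le
    (fun k c => fcpObjective L Fq F P (X c) (Shat k)) Ghat

/-- **Multi-channel FCP is the joint maximum-likelihood relative-RIR estimator.**
Under pairwise orthogonality of the filtered source subspaces (per channel),
a filter family `(Ĝ^k_c)` maximizes the joint log-likelihood if and only if each
`Ĝ^k_c` minimizes the FCP objective for the pair `(k, c)`. -/
theorem fcp_is_maximum_likelihood_multichannel
    (L Fq K C F P : ℕ) (hK : 1 ≤ K) (hC : 1 ≤ C)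
    (X : Fin C → Fin L → Fin Fq → ℂ) (Shat : Fin K → ℤ → Fin Fq → ℂ)
    (σN c₀ : ℝ) (hσ : 0 < σN) (hc : 0 < c₀)
    (horth : ∀ c : Fin C, ∀ k k' : Fin K, k ≠ k' →
      ∀ G G' : ↥(Finset.Icc (-(F : ℤ)) (P : ℤ)) → Fin Fq → ℂ,
        ∑ l : Fin L, ∑ f : Fin Fq,
          frameConv L Fq F P G (Shat k) l f *
            (starRingEnd ℂ) (frameConv L Fq F P G' (Shat k') l f) = 0)
    (Ghat : Fin K → Fin C → ↥(Finset.Icc (-(F : ℤ)) (P : ℤ)) → Fin Fq → ℂ) :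
    (∀ G : Fin K → Fin C → ↥(Finset.Icc (-(F : ℤ)) (P : ℤ)) → Fin Fq → ℂ,
        jointLogLik L Fq K C F P X Shat σN c₀ G
          ≤ jointLogLik L Fq K C F P X Shat σN c₀ Ghat)
      ↔ (∀ k : Fin K, ∀ c : Fin C,
          ∀ G : ↥(Finset.Icc (-(F : ℤ)) (P : ℤ)) → Fin Fq → ℂ,
            fcpObjective L Fq F P (X c) (Shat k) (Ghat k c)
              ≤ fcpObjective L Fq F P (X c) (Shat k) G) :=
  fcp_is_maximum_likelihood_multichannel_general L Fq K C F P X Shat σN c₀ hσ hc horth Ghat
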